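/- Let X be a chain connected uniform space with basepoint ∗ and E a symmetric entourage. Let X_E be the set of E-homotopy classes [α]_E of E-chains α starting at ∗, and let φ : X_E → X be the endpoint map φ([∗ = x₀, …, xₙ]_E) = xₙ. For a symmetric entourage D ⊆ E, let D* ⊆ X_E × X_E be the set of pairs ([α]_E, [β]_E) admitting representatives α = (∗ = x₀, …, xₙ, y) and β = (∗ = x₀, …, xₙ, z) with (y,z) ∈ D. Then: (1) φ is injective on every E*-ball B([γ]_E, E*); (2) for every such D and every [α]_E, φ(B([α]_E, D*)) = B(φ([α]_E), D), and the image of D* under φ × φ is D; (3) the family {D* : D a symmetric entourage of X with D ⊆ E} is a base for a uniformity on X_E: each D* is symmetric and contains the diagonal, (D ∩ D′)* ⊆ D* ∩ D′*, and for every D there is a symmetric entourage G ⊆ E with G*∘G* ⊆ D*. -/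

import Mathlib

open UniformSpace

universe u v

/-- A uniform space is *chain connected* if every uniformly continuous function from it
into a discrete uniform space is constant. -/
def ChainConnected (X : Type u) [UniformSpace X] : Prop :=
  ∀ (Y : Type v) (f : X → Y), @UniformContinuous X Y _ ⊥ f → ∀ x y : X, f x = f y

/-- `l` is a (nonempty) `E`-chain, i.e. a finite sequence of points with all consecutive
pairs in `E`. -/
def IsChainList {X : Type u} (E : Set (X × X)) (l : List X) : Prop :=
  l ≠ [] ∧ l.Chain' (fun a b => (a, b) ∈ E)

/-- `l'` is an (elementary) `E`-extension of `l`: it is obtained from `l` by inserting one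
point, leaving the endpoints fixed, and both `l` and `l'` are `E`-chains. -/
def ChainExt {X : Type u} (E : Set (X × X)) (l l' : List X) : Prop :=
  (∃ (s t : List X) (x : X), l = s ++ t ∧ l' = s ++ x :: t) ∧
    l.head? = l'.head? ∧ l.getLast? = l'.getLast? ∧
    l.Chain' (fun a b => (a, b) ∈ E) ∧ l'.Chain' (fun a b => (a, b) ∈ E)

/-- Two chains are `E`-homotopic if they are related by the equivalence relation generated
by one-point `E`-extensions. -/
def ChainHomotopic {X : Type u} (E : Set (X × X)) : List X → List X → Prop :=
  Relation.EqvGen (ChainExt E)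

theorem ChainHomotopic.getLast?_eq {X : Type u} {E : Set (X × X)} {l l' : List X}
    (h : ChainHomotopic E l l') : l.getLast? = l'.getLast? := by
  induction h with
  | rel _ _ h => exact h.2.2.1
  | refl _ => rfl
  | symm _ _ _ ih => exact ih.symm
  | trans _ _ _ _ _ ih₁ ih₂ => exact ih₁.trans ih₂

/-- The `E`-chains in `X` starting at the basepoint `b`. -/
def ChainsFrom {X : Type u} (E : Set (X × X)) (b : X) : Type u :=
  {l : List X // IsChainList E l ∧ l.head? = some b}

/-- `E`-homotopy as a setoid on the `E`-chains starting at `b`. -/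
def chainSetoid {X : Type u} (E : Set (X × X)) (b : X) : Setoid (ChainsFrom E b) where
  r α β := ChainHomotopic E α.1 β.1
  iseqv := ⟨fun _ => Relation.EqvGen.refl _,
    fun h => Relation.EqvGen.symm _ _ h,
    fun h h' => Relation.EqvGen.trans _ _ _ h h'⟩

/-- `X_E`: the set of `E`-homotopy classes of `E`-chains starting at the basepoint `b`. -/
def SpaceXE {X : Type u} (E : Set (X × X)) (b : X) : Type u :=
  Quotient (chainSetoid E b)

/-- The endpoint map `φ : X_E → X`, sending the class of a chain to its last point. -/
def endpointMap {X : Type u} (E : Set (X × X)) (b : X) : SpaceXE E b → X :=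
  Quotient.lift (fun α : ChainsFrom E b => α.1.getLastD b)
    (fun α β h => by
      have h' : α.1.getLast? = β.1.getLast? := ChainHomotopic.getLast?_eq h
      simp only [List.getLastD_eq_getLast?, h'])

/-- The entourage `D*` on `X_E`: a pair of classes lies in `D*` iff it admits representatives
`(∗ = x₀, …, xₙ, y)` and `(∗ = x₀, …, xₙ, z)` with `(y, z) ∈ D`. -/
def starRel {X : Type u} (E : Set (X × X)) (b : X) (D : Set (X × X)) :
    Set (SpaceXE E b × SpaceXE E b) :=
  {p | ∃ (α β : ChainsFrom E b) (s : List X) (y z : X), s ≠ [] ∧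
      α.1 = s ++ [y] ∧ β.1 = s ++ [z] ∧ (y, z) ∈ D ∧
      p.1 = Quotient.mk (chainSetoid E b) α ∧ p.2 = Quotient.mk (chainSetoid E b) β}

/-- The identity relation (Mathlib's former `idRel`). -/
def idRel {α : Type*} : Set (α × α) :=
  { p : α × α | p.1 = p.2 }

/-- Composition of relations (Mathlib's former `compRel`). -/
def compRel {α : Type*} (r₁ r₂ : Set (α × α)) : Set (α × α) :=
  { p : α × α | ∃ z : α, (p.1, z) ∈ r₁ ∧ (z, p.2) ∈ r₂ }

/-- A relation is symmetric (Mathlib's former `SymmetricRel`). -/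
def SymmetricRel {α : Type*} (V : Set (α × α)) : Prop :=
  Prod.swap ⁻¹' V = V

/-!
If `(⟦α⟧, c) ∈ D*` with `D ⊆ E`, then `c` is the class of `α` extended by the single point
`φ c`: writing the witnesses as `s ++ [y]` and `s ++ [z]`, the chain `s ++ [z]` is homotopic to
`s ++ [y, z]` by inserting `y`, and appending `z` respects homotopy. Hence `φ` is injective on
`E*`-balls, and if `G ∘ G ⊆ D` then `G* ∘ G* ⊆ D*`, since both ends of a `G*`-path through `⟦β⟧`
are one-point extensions of `β`. Conversely every one-point extension `α ++ [z]` with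
`(φ ⟦α⟧, z) ∈ D` lies in the `D*`-ball of `⟦α⟧ = ⟦α ++ [φ ⟦α⟧]⟧`, so `φ` maps `D*`-balls onto
`D`-balls. Finally the range of `φ` is closed under `E`-steps, so chain connectedness, applied to
its indicator, makes `φ` surjective.
-/

open scoped SetRel

theorem symmetricRel_iff_isSymm {α : Type*} {V : Set (α × α)} :
    SymmetricRel V ↔ SetRel.IsSymm V :=
  SetRel.inv_eq_self_iff

theorem ChainConnected.mem_of_forall_mem_iff {X : Type u} [UniformSpace X]
    (hX : ChainConnected.{u, v} X) {E : Set (X × X)} (hE : E ∈ uniformity X) {S : Set X}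
    (hS : ∀ p ∈ E, p.1 ∈ S ↔ p.2 ∈ S) {x : X} (hx : x ∈ S) (y : X) : y ∈ S := by
  let f : X → ULift.{v} Prop := fun z => ULift.up (z ∈ S)
  have hf : @UniformContinuous X _ _ ⊥ f :=
    Filter.tendsto_principal.2 <| Filter.mem_of_superset hE fun p hp =>
      congrArg ULift.up (propext (hS p hp))
  have hxy : (x ∈ S) = (y ∈ S) := congrArg ULift.down (hX _ f hf x y)
  exact hxy ▸ hx

theorem List.IsChain.append_singleton {α : Type*} {R : α → α → Prop} {l : List α}
    (hl : l.IsChain R) {z : α} (hz : ∀ y ∈ l.getLast?, R y z) : (l ++ [z]).IsChain R :=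
  hl.append (.singleton z) fun y hy _ h => Option.mem_some_iff.1 h ▸ hz y hy

section Homotopy

variable {X : Type u} {E : Set (X × X)}

theorem ChainExt.append_singleton {l l' : List X} (h : ChainExt E l l') {z : X}
    (hz : ∀ y ∈ l.getLast?, (y, z) ∈ E) : ChainExt E (l ++ [z]) (l' ++ [z]) := by
  obtain ⟨⟨s, t, x, rfl, rfl⟩, hhead, hlast, hc, hc'⟩ := h
  refine ⟨⟨s, t ++ [z], x, by simp, by simp⟩, ?_,
    by rw [List.getLast?_concat, List.getLast?_concat],
    hc.append_singleton hz, hc'.append_singleton (hlast ▸ hz)⟩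
  simpa only [List.head?_append] using congrArg (Option.or · [z].head?) hhead

theorem ChainHomotopic.append_singleton {l l' : List X} (h : ChainHomotopic E l l') {z : X}
    (hz : ∀ y ∈ l.getLast?, (y, z) ∈ E) : ChainHomotopic E (l ++ [z]) (l' ++ [z]) := by
  induction h with
  | rel _ _ h => exact .rel _ _ (h.append_singleton hz)
  | refl => exact .refl _
  | symm _ _ h ih => exact .symm _ _ (ih (ChainHomotopic.getLast?_eq h ▸ hz))
  | trans _ _ _ h₁ _ ih₁ ih₂ =>
    exact .trans _ _ _ (ih₁ hz) (ih₂ (ChainHomotopic.getLast?_eq h₁ ▸ hz))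

theorem ChainHomotopic.symm {l l' : List X} (h : ChainHomotopic E l l') :
    ChainHomotopic E l' l :=
  Relation.EqvGen.symm _ _ h

theorem ChainHomotopic.trans {l₁ l₂ l₃ : List X} (h₁ : ChainHomotopic E l₁ l₂)
    (h₂ : ChainHomotopic E l₂ l₃) : ChainHomotopic E l₁ l₃ :=
  Relation.EqvGen.trans _ _ _ h₁ h₂

theorem chainHomotopic_insert_before_getLast {s : List X} (hs : s ≠ []) {y z : X}
    (hy : (s ++ [y]).IsChain fun p q => (p, q) ∈ E) (hyz : (y, z) ∈ E)
    (hz : (s ++ [z]).IsChain fun p q => (p, q) ∈ E) :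
    ChainHomotopic E (s ++ [z]) (s ++ [y, z]) := by
  refine .rel _ _ ⟨⟨s, [z], y, rfl, rfl⟩, ?_, by simp, hz, ?_⟩
  · rw [List.head?_append_of_ne_nil _ hs, List.head?_append_of_ne_nil _ hs]
  · rw [show s ++ [y, z] = s ++ [y] ++ [z] by simp]
    exact hy.append_singleton (by simpa using hyz)

theorem chainHomotopic_append_getLast {l : List X} (hl : l ≠ [])
    (hc : l.IsChain fun p q => (p, q) ∈ E) {y : X} (hy : l.getLast? = some y)
    (hyy : (y, y) ∈ E) : ChainHomotopic E l (l ++ [y]) :=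
  .rel _ _ ⟨⟨l, [], y, by simp, rfl⟩, (List.head?_append_of_ne_nil _ hl).symm, by simp [hy],
    hc, hc.append_singleton (by simpa [hy] using hyy)⟩

end Homotopy

namespace ChainsFrom

variable {X : Type u} {E : Set (X × X)} {b : X}

theorem ne_nil (α : ChainsFrom E b) : α.1 ≠ [] := α.2.1.1

theorem isChain (α : ChainsFrom E b) : α.1.IsChain fun p q => (p, q) ∈ E := α.2.1.2

theorem mem_getLast?_iff (α : ChainsFrom E b) {y : X} :
    y ∈ α.1.getLast? ↔ y = α.1.getLastD b := by
  rw [List.getLastD_eq_getLast?, List.getLast?_eq_some_getLast α.ne_nil, Option.getD_some,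
    Option.mem_some_iff, eq_comm]

def snoc (α : ChainsFrom E b) (z : X) (h : (α.1.getLastD b, z) ∈ E) : ChainsFrom E b :=
  ⟨α.1 ++ [z],
    ⟨by simp, α.isChain.append_singleton fun _ hy => α.mem_getLast?_iff.1 hy ▸ h⟩,
    (List.head?_append_of_ne_nil _ α.ne_nil).trans α.2.2⟩

end ChainsFrom

section SpaceXE

variable {X : Type u} {E : Set (X × X)} {b : X} {D : Set (X × X)}

local notation "⟦" α "⟧ₑ" => Quotient.mk (chainSetoid _ _) α

theorem endpointMap_mk (α : ChainsFrom E b) : endpointMap E b ⟦α⟧ₑ = α.1.getLastD b := rfl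

theorem endpointMap_mk_snoc (α : ChainsFrom E b) {z : X} (h : (α.1.getLastD b, z) ∈ E) :
    endpointMap E b ⟦α.snoc z h⟧ₑ = z :=
  List.getLastD_concat

theorem mk_snoc_mem_starRel (α : ChainsFrom E b) {y z : X} (hy : (α.1.getLastD b, y) ∈ E)
    (hz : (α.1.getLastD b, z) ∈ E) (hyz : (y, z) ∈ D) :
    (⟦α.snoc y hy⟧ₑ, ⟦α.snoc z hz⟧ₑ) ∈ starRel E b D :=
  ⟨_, _, α.1, y, z, α.ne_nil, rfl, rfl, hyz, rfl, rfl⟩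

theorem endpointMap_mem_of_mem_starRel {p : SpaceXE E b × SpaceXE E b}
    (h : p ∈ starRel E b D) : (endpointMap E b p.1, endpointMap E b p.2) ∈ D := by
  obtain ⟨α, β, s, y, z, -, hα, hβ, hyz, h₁, h₂⟩ := h
  rwa [h₁, h₂, endpointMap_mk, endpointMap_mk, hα, hβ, List.getLastD_concat,
    List.getLastD_concat]

theorem mk_eq_mk_snoc_getLastD (hE : ∀ x, (x, x) ∈ E) (α : ChainsFrom E b) :
    ⟦α⟧ₑ = ⟦α.snoc (α.1.getLastD b) (hE _)⟧ₑ :=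
  Quotient.sound <|
    chainHomotopic_append_getLast α.ne_nil α.isChain (α.mem_getLast?_iff.2 rfl) (hE _)

theorem mk_mem_starRel_mk_snoc (hE : ∀ x, (x, x) ∈ E) (α : ChainsFrom E b) {z : X}
    (h : (α.1.getLastD b, z) ∈ E) (hz : (α.1.getLastD b, z) ∈ D) :
    (⟦α⟧ₑ, ⟦α.snoc z h⟧ₑ) ∈ starRel E b D := by
  rw [mk_eq_mk_snoc_getLastD hE α]
  exact mk_snoc_mem_starRel α _ h hz

theorem mk_snoc_eq_of_mem_starRel (hDE : D ⊆ E) {α : ChainsFrom E b} {c : SpaceXE E b}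
    (hc : (⟦α⟧ₑ, c) ∈ starRel E b D) {z : X} (hz : endpointMap E b c = z)
    (h : (α.1.getLastD b, z) ∈ E) : ⟦α.snoc z h⟧ₑ = c := by
  obtain ⟨α', γ, s, y, z', hs, hα', hγ, hyz', hαα', rfl⟩ := hc
  obtain rfl : z = z' := by rw [← hz, endpointMap_mk, hγ, List.getLastD_concat]
  have hαα' : ChainHomotopic E α.1 (s ++ [y]) := hα' ▸ Quotient.exact hαα'
  have h₁ : ChainHomotopic E (α.1 ++ [z]) (s ++ [y, z]) := by
    simpa using hαα'.append_singleton fun _ hy => α.mem_getLast?_iff.1 hy ▸ h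
  have h₂ : ChainHomotopic E γ.1 (s ++ [y, z]) := by
    rw [hγ]
    exact chainHomotopic_insert_before_getLast hs (hα' ▸ α'.isChain) (hDE hyz')
      (hγ ▸ γ.isChain)
  exact Quotient.sound (h₁.trans h₂.symm)

theorem injOn_endpointMap_ball_starRel (hDE : D ⊆ E) (γ : SpaceXE E b) :
    Set.InjOn (endpointMap E b) {c | (γ, c) ∈ starRel E b D} := by
  induction γ using Quotient.inductionOn with | h α => ?_
  intro c hc c' hc' hcc'
  have h := hDE (endpointMap_mem_of_mem_starRel hc')
  exact (mk_snoc_eq_of_mem_starRel hDE hc hcc' h).symm.trans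
    (mk_snoc_eq_of_mem_starRel hDE hc' rfl h)

theorem image_endpointMap_ball_starRel (hE : ∀ x, (x, x) ∈ E) (hDE : D ⊆ E)
    (a : SpaceXE E b) :
    endpointMap E b '' {c | (a, c) ∈ starRel E b D} = ball (endpointMap E b a) D := by
  induction a using Quotient.inductionOn with | h α => ?_
  ext x
  constructor
  · rintro ⟨c, hc, rfl⟩
    exact endpointMap_mem_of_mem_starRel hc
  · intro hx
    exact ⟨_, mk_mem_starRel_mk_snoc hE α (hDE hx) hx, endpointMap_mk_snoc α (hDE hx)⟩

theorem image_endpointMap_prod_starRel (hE : ∀ x, (x, x) ∈ E) (hDE : D ⊆ E)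
    (hφ : Function.Surjective (endpointMap E b)) :
    (fun p : SpaceXE E b × SpaceXE E b => (endpointMap E b p.1, endpointMap E b p.2)) ''
      starRel E b D = D := by
  refine Set.Subset.antisymm ?_ fun ⟨x, y⟩ hxy => ?_
  · rintro _ ⟨p, hp, rfl⟩
    exact endpointMap_mem_of_mem_starRel hp
  · obtain ⟨a, rfl⟩ := hφ x
    obtain ⟨c, hc, rfl⟩ : y ∈ endpointMap E b '' {c | (a, c) ∈ starRel E b D} := by
      rwa [image_endpointMap_ball_starRel hE hDE]
    exact ⟨(a, c), hc, rfl⟩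

theorem endpointMap_surjective [UniformSpace X] (hX : ChainConnected.{u, v} X)
    (hE : E ∈ uniformity X) [SetRel.IsSymm E] : Function.Surjective (endpointMap E b) := by
  have step : ∀ p ∈ E,
      p.1 ∈ Set.range (endpointMap E b) → p.2 ∈ Set.range (endpointMap E b) := by
    rintro ⟨x, y⟩ hxy ⟨a, rfl⟩
    induction a using Quotient.inductionOn with | h α => ?_
    exact ⟨_, endpointMap_mk_snoc α hxy⟩
  have hb : b ∈ Set.range (endpointMap E b) :=
    ⟨⟦⟨[b], ⟨List.cons_ne_nil _ _, List.isChain_singleton b⟩, rfl⟩⟧ₑ, rfl⟩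
  exact fun y => hX.mem_of_forall_mem_iff hE
    (fun p hp => ⟨step p hp, step p.swap (SetRel.symm E hp)⟩) hb y

theorem idRel_subset_starRel (hD : ∀ x, (x, x) ∈ D) (hDE : D ⊆ E) :
    idRel ⊆ starRel E b D := by
  rintro ⟨a, a'⟩ (rfl : a = a')
  induction a using Quotient.inductionOn with | h α => ?_
  have hα := mk_eq_mk_snoc_getLastD (fun x => hDE (hD x)) α
  rw [hα]
  exact mk_snoc_mem_starRel α _ _ (hD _)

instance isSymm_starRel [SetRel.IsSymm D] : SetRel.IsSymm (starRel E b D) where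
  symm _ _ := fun ⟨α, β, s, y, z, hs, hα, hβ, hyz, h₁, h₂⟩ =>
    ⟨β, α, s, z, y, hs, hβ, hα, SetRel.symm D hyz, h₂, h₁⟩

theorem starRel_mono : Monotone (starRel E b) :=
  fun _ _ hDD' _ ⟨α, β, s, y, z, hs, hα, hβ, hyz, h₁, h₂⟩ =>
    ⟨α, β, s, y, z, hs, hα, hβ, hDD' hyz, h₁, h₂⟩

theorem starRel_comp_subset {G : Set (X × X)} [SetRel.IsSymm G] (hGE : G ⊆ E)
    (hGD : G ○ G ⊆ D) :
    starRel E b G ○ starRel E b G ⊆ starRel E b D := by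
  rintro ⟨p, q⟩ ⟨m, hpm, hmq⟩
  induction m using Quotient.inductionOn with | h β => ?_
  have hmp := SetRel.symm _ hpm
  have hp := mk_snoc_eq_of_mem_starRel hGE hmp rfl (hGE (endpointMap_mem_of_mem_starRel hmp))
  have hq := mk_snoc_eq_of_mem_starRel hGE hmq rfl (hGE (endpointMap_mem_of_mem_starRel hmq))
  rw [← hp, ← hq]
  exact mk_snoc_mem_starRel β _ _ (hGD ⟨_, endpointMap_mem_of_mem_starRel hpm,
    endpointMap_mem_of_mem_starRel hmq⟩)

end SpaceXE

/-- (Statement 19) Properties of the endpoint map `φ : X_E → X` and of the entourages `D*`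
for a chain connected uniform space `X` with basepoint `∗` and symmetric entourage `E`:
(1) `φ` is injective on every `E*`-ball;
(2) for every symmetric entourage `D ⊆ E` and every class `a`,
    `φ(B(a, D*)) = B(φ(a), D)`, and the image of `D*` under `φ × φ` is `D`;
(3) the family of the `D*` is a base for a uniformity on `X_E`: each `D*` is symmetric and
    contains the diagonal, `(D ∩ D′)* ⊆ D* ∩ D′*`, and for every `D` there is a symmetric
    entourage `G ⊆ E` with `G* ∘ G* ⊆ D*`. -/
theorem spaceXE_uniformity_base {X : Type u} [UniformSpace X] (bp : X)
    (hcc : ChainConnected.{u, v} X)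
    (E : Set (X × X)) (hE : E ∈ uniformity X) (hEsym : SymmetricRel E) :
    (∀ γ : SpaceXE E bp, ∀ a ∈ {c | (γ, c) ∈ starRel E bp E},
      ∀ b ∈ {c | (γ, c) ∈ starRel E bp E},
        endpointMap E bp a = endpointMap E bp b → a = b) ∧
    (∀ D ∈ uniformity X, SymmetricRel D → D ⊆ E →
      (∀ a : SpaceXE E bp,
        endpointMap E bp '' {c | (a, c) ∈ starRel E bp D} =
          ball (endpointMap E bp a) D) ∧
      (fun p : SpaceXE E bp × SpaceXE E bp =>
        (endpointMap E bp p.1, endpointMap E bp p.2)) '' starRel E bp D = D) ∧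
    (∀ D ∈ uniformity X, SymmetricRel D → D ⊆ E →
      SymmetricRel (starRel E bp D) ∧ idRel ⊆ starRel E bp D) ∧
    (∀ D ∈ uniformity X, SymmetricRel D → D ⊆ E →
      ∀ D' ∈ uniformity X, SymmetricRel D' → D' ⊆ E →
        starRel E bp (D ∩ D') ⊆ starRel E bp D ∩ starRel E bp D') ∧
    (∀ D ∈ uniformity X, SymmetricRel D → D ⊆ E →
      ∃ G ∈ uniformity X, SymmetricRel G ∧ G ⊆ E ∧
        compRel (starRel E bp G) (starRel E bp G) ⊆ starRel E bp D) := by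
  have hErefl : ∀ x, (x, x) ∈ E := fun _ => refl_mem_uniformity hE
  have := symmetricRel_iff_isSymm.1 hEsym
  refine ⟨fun γ => injOn_endpointMap_ball_starRel subset_rfl γ,
    fun D _ _ hDE => ⟨image_endpointMap_ball_starRel hErefl hDE,
      image_endpointMap_prod_starRel hErefl hDE (endpointMap_surjective hcc hE)⟩,
    fun D hD hDsym hDE => ⟨?_, idRel_subset_starRel (fun _ => refl_mem_uniformity hD) hDE⟩,
    fun D _ _ _ D' _ _ _ => starRel_mono.map_inf_le D D', fun D hD _ _ => ?_⟩
  · have := symmetricRel_iff_isSymm.1 hDsym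
    exact symmetricRel_iff_isSymm.2 inferInstance
  · obtain ⟨W, hW, hWsymm, hWD⟩ := comp_symm_mem_uniformity_sets hD
    have hGD : (W ∩ E) ○ (W ∩ E) ⊆ D :=
      (SetRel.comp_subset_comp Set.inter_subset_left Set.inter_subset_left).trans hWD
    exact ⟨W ∩ E, Filter.inter_mem hW hE, symmetricRel_iff_isSymm.2 inferInstance,
      Set.inter_subset_right, starRel_comp_subset Set.inter_subset_right hGD⟩
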